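/- arXiv:2007.10238 — 3 statements merged into one kernel-verified Lean document; each statement's English description precedes it below -/
import Mathlib

section
/- Conservation of mass under the continuity equation: let T > 0, let S : ℝ × E → ℝ and v : ℝ × E → E be continuously differentiable (ContDiff ℝ 1 on ℝ × E), and suppose there is a compact set K ⊆ E such that S (t, x) = 0 for all t ∈ [0,T] and all x ∉ K. If the continuity equation holds on [0,T] × E, i.e. ∂ₜS(t,x) + div (fun y => S (t,y) • v (t,y)) x = 0 for all t ∈ [0,T] and x ∈ E, then the total mass t ↦ ∫ x, S (t, x) (Lebesgue integral over E) is constant on [0,T]. -/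
/-!
On `[0, T]` the mass equals `m t = ∫ x in K, S (t, x)`, and differentiating under the integral
sign gives `m' t = ∫_K ∂ₜS = -∫_K div (S v)`. Since `S(t, ·) v(t, ·)` is a `C¹` field supported
in `K`, the integral of its divergence vanishes: integrating the directional derivatives of a
compactly supported function by parts against the constant `1` gives zero, and the trace commutes
with the integral. Hence `m' = 0` on `[0, T]` and `m` is constant there.
-/

open MeasureTheory

/-- The divergence of a vector field `u` at `x`: the trace of its Fréchet derivative. -/
noncomputable def vdiv {d : ℕ} (u : EuclideanSpace ℝ (Fin d) → EuclideanSpace ℝ (Fin d))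
    (x : EuclideanSpace ℝ (Fin d)) : ℝ :=
  LinearMap.trace ℝ (EuclideanSpace ℝ (Fin d))
    (fderiv ℝ u x : EuclideanSpace ℝ (Fin d) →ₗ[ℝ] EuclideanSpace ℝ (Fin d))

open Set

section Divergence

variable {E F : Type*} [NormedAddCommGroup E] [NormedSpace ℝ E] [FiniteDimensional ℝ E]
  [MeasurableSpace E] [BorelSpace E] {μ : Measure E} [μ.IsAddHaarMeasure]
  [NormedAddCommGroup F] [NormedSpace ℝ F]

theorem integral_fderiv_apply_eq_zero {g : E → F} (hg : ContDiff ℝ 1 g)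
    (hcs : HasCompactSupport g) (v : E) : ∫ x, fderiv ℝ g x v ∂μ = 0 := by
  have hg' : Integrable (fun x ↦ fderiv ℝ g x v) μ :=
    ((hg.continuous_fderiv one_ne_zero).clm_apply continuous_const).integrable_of_hasCompactSupport
      (hcs.fderiv_apply ℝ v)
  simpa using integral_smul_fderiv_eq_neg_fderiv_smul_of_integrable (μ := μ)
    (f := fun _ ↦ (1 : ℝ)) (v := v) (by simp) (by simpa using hg')
    (by simpa using hg.continuous.integrable_of_hasCompactSupport hcs)
    (fun x _ ↦ differentiableAt_const _) (fun x _ ↦ hg.differentiable one_ne_zero x)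

theorem integral_fderiv_eq_zero [CompleteSpace F] {g : E → F} (hg : ContDiff ℝ 1 g)
    (hcs : HasCompactSupport g) : ∫ x, fderiv ℝ g x ∂μ = 0 := by
  ext v
  rw [zero_apply, ContinuousLinearMap.integral_apply
    ((hg.continuous_fderiv one_ne_zero).integrable_of_hasCompactSupport (hcs.fderiv ℝ)),
    integral_fderiv_apply_eq_zero hg hcs]

theorem integral_trace_fderiv_eq_zero {u : E → E} (hu : ContDiff ℝ 1 u)
    (hcs : HasCompactSupport u) :
    ∫ x, LinearMap.trace ℝ E (fderiv ℝ u x : E →ₗ[ℝ] E) ∂μ = 0 := by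
  let trace : (E →L[ℝ] E) →L[ℝ] ℝ :=
    LinearMap.toContinuousLinearMap (LinearMap.trace ℝ E ∘ₗ ContinuousLinearMap.coeLM ℝ)
  calc ∫ x, trace (fderiv ℝ u x) ∂μ = trace (∫ x, fderiv ℝ u x ∂μ) :=
        trace.integral_comp_comm
          ((hu.continuous_fderiv one_ne_zero).integrable_of_hasCompactSupport (hcs.fderiv ℝ))
    _ = 0 := by rw [integral_fderiv_eq_zero hu hcs, map_zero]

end Divergence

theorem integral_vdiv_eq_zero {d : ℕ} {u : EuclideanSpace ℝ (Fin d) → EuclideanSpace ℝ (Fin d)}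
    (hu : ContDiff ℝ 1 u) (hcs : HasCompactSupport u) : ∫ x, vdiv u x = 0 :=
  integral_trace_fderiv_eq_zero hu hcs

theorem vdiv_of_notMem_tsupport {d : ℕ}
    {u : EuclideanSpace ℝ (Fin d) → EuclideanSpace ℝ (Fin d)} {x : EuclideanSpace ℝ (Fin d)}
    (hx : x ∉ tsupport u) : vdiv u x = 0 := by
  simp [vdiv, fderiv_of_notMem_tsupport ℝ hx]

theorem tsupport_subset_of_isClosed {X M : Type*} [TopologicalSpace X] [Zero M] {f : X → M}
    {K : Set X} (hK : IsClosed K) (hf : ∀ x ∉ K, f x = 0) : tsupport f ⊆ K :=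
  closure_minimal (Function.support_subset_iff'.2 hf) hK

section ParametricIntegral

variable {E F : Type*} [NormedAddCommGroup E] [NormedSpace ℝ E]
  [NormedAddCommGroup F] [NormedSpace ℝ F]

theorem HasFDerivAt.hasDerivAt_fst {f : ℝ × E → F} {f' : ℝ × E →L[ℝ] F} {t : ℝ} {x : E}
    (hf : HasFDerivAt f f' (t, x)) : HasDerivAt (fun r ↦ f (r, x)) (f' (1, 0)) t :=
  hf.comp_hasDerivAt t ((hasDerivAt_id t).prodMk (hasDerivAt_const t x))

variable [MeasurableSpace E] [OpensMeasurableSpace E] {μ : Measure E} [IsFiniteMeasureOnCompacts μ]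

theorem hasDerivAt_setIntegral_of_contDiff {f : ℝ × E → F} (hf : ContDiff ℝ 1 f)
    {K : Set E} (hK : IsCompact K) (t₀ : ℝ) :
    HasDerivAt (fun t ↦ ∫ x in K, f (t, x) ∂μ)
      (∫ x in K, deriv (fun r ↦ f (r, x)) t₀ ∂μ) t₀ := by
  set f' : ℝ × E → F := fun p ↦ fderiv ℝ f p (1, 0)
  have hf' : Continuous f' := (hf.continuous_fderiv one_ne_zero).clm_apply continuous_const
  have hderiv (t : ℝ) (x : E) : HasDerivAt (fun r ↦ f (r, x)) (f' (t, x)) t :=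
    ((hf.differentiable one_ne_zero) (t, x)).hasFDerivAt.hasDerivAt_fst
  obtain ⟨C, hC⟩ :=
    ((isCompact_Icc (a := t₀ - 1) (b := t₀ + 1)).prod hK).exists_bound_of_continuousOn
      hf'.continuousOn
  have hslice {g : ℝ × E → F} (hg : Continuous g) (t : ℝ) :
      Integrable (fun x ↦ g (t, x)) (μ.restrict K) :=
    (hg.comp (Continuous.prodMk_right t)).continuousOn.integrableOn_compact hK
  simp_rw [fun x ↦ (hderiv t₀ x).deriv]
  refine (hasDerivAt_integral_of_dominated_loc_of_deriv_le (bound := fun _ ↦ C)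
    (Metric.ball_mem_nhds t₀ one_pos)
    (.of_forall fun t ↦ (hslice hf.continuous t).aestronglyMeasurable) (hslice hf.continuous t₀)
    (hslice hf' t₀).aestronglyMeasurable ?_ (integrableOn_const hK.measure_ne_top)
    (.of_forall fun x t _ ↦ hderiv t x)).2
  filter_upwards [ae_restrict_mem hK.measurableSet] with x hx t ht
  rw [Real.ball_eq_Ioo] at ht
  exact hC (t, x) ⟨Ioo_subset_Icc_self ht, hx⟩

end ParametricIntegral

theorem mass_conservation_general (d : ℕ) (T : ℝ)
    (S : ℝ × EuclideanSpace ℝ (Fin d) → ℝ)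
    (v : ℝ × EuclideanSpace ℝ (Fin d) → EuclideanSpace ℝ (Fin d))
    (hS : ContDiff ℝ 1 S) (hv : ContDiff ℝ 1 v)
    (K : Set (EuclideanSpace ℝ (Fin d))) (hK : IsCompact K)
    (hsupp : ∀ t ∈ Set.Icc (0 : ℝ) T, ∀ x ∉ K, S (t, x) = 0)
    (heq : ∀ t ∈ Set.Icc (0 : ℝ) T, ∀ x : EuclideanSpace ℝ (Fin d),
      deriv (fun r => S (r, x)) t + vdiv (fun y => S (t, y) • v (t, y)) x = 0) :
    ∀ t ∈ Set.Icc (0 : ℝ) T, ∀ s ∈ Set.Icc (0 : ℝ) T,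
      ∫ x, S (t, x) = ∫ x, S (s, x) := by
  -- Over `K` rather than `E`, the mass is differentiable on all of `ℝ`, endpoints included.
  set mass : ℝ → ℝ := fun t ↦ ∫ x in K, S (t, x)
  have hmass (t) (ht : t ∈ Icc 0 T) : ∫ x, S (t, x) = mass t :=
    (setIntegral_eq_integral_of_forall_compl_eq_zero (hsupp t ht)).symm
  have hmass_deriv (t) (ht : t ∈ Icc 0 T) : HasDerivAt mass 0 t := by
    set u := fun y ↦ S (t, y) • v (t, y)
    have hu_tsupport : tsupport u ⊆ K :=
      tsupport_subset_of_isClosed hK.isClosed fun y hy ↦ by simp [u, hsupp t ht y hy]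
    refine (hasDerivAt_setIntegral_of_contDiff hS hK t).congr_deriv ?_
    calc ∫ y in K, deriv (fun r ↦ S (r, y)) t = -∫ y in K, vdiv u y := by
          rw [← integral_neg]
          exact integral_congr_ae (.of_forall fun y ↦ eq_neg_of_add_eq_zero_left (heq t ht y))
      _ = -∫ y, vdiv u y := by
          rw [setIntegral_eq_integral_of_forall_compl_eq_zero
            fun y hy ↦ vdiv_of_notMem_tsupport fun h ↦ hy (hu_tsupport h)]
      _ = 0 := by
          rw [integral_vdiv_eq_zero (by fun_prop)
            (hK.of_isClosed_subset (isClosed_tsupport u) hu_tsupport), neg_zero]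
  have hmass_const := constant_of_has_deriv_right_zero
    (fun t ht ↦ (hmass_deriv t ht).continuousAt.continuousWithinAt)
    (fun t ht ↦ (hmass_deriv t (Ico_subset_Icc_self ht)).hasDerivWithinAt)
  intro t ht s hs
  rw [hmass t ht, hmass s hs, hmass_const t ht, hmass_const s hs]

/-- **Conservation of mass under the continuity equation.**
If `S` and `v` are `C¹`, `S(t,·)` is supported in a fixed compact set `K` for
`t ∈ [0,T]`, and the continuity equation `∂ₜS + div (S·v) = 0` holds on `[0,T] × E`,
then the total mass `t ↦ ∫ S(t,x) dx` is constant on `[0,T]`. -/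
theorem mass_conservation (d : ℕ) (hd : 1 ≤ d) (T : ℝ) (hT : 0 < T)
    (S : ℝ × EuclideanSpace ℝ (Fin d) → ℝ)
    (v : ℝ × EuclideanSpace ℝ (Fin d) → EuclideanSpace ℝ (Fin d))
    (hS : ContDiff ℝ 1 S) (hv : ContDiff ℝ 1 v)
    (K : Set (EuclideanSpace ℝ (Fin d))) (hK : IsCompact K)
    (hsupp : ∀ t ∈ Set.Icc (0 : ℝ) T, ∀ x ∉ K, S (t, x) = 0)
    (heq : ∀ t ∈ Set.Icc (0 : ℝ) T, ∀ x : EuclideanSpace ℝ (Fin d),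
      deriv (fun r => S (r, x)) t + vdiv (fun y => S (t, y) • v (t, y)) x = 0) :
    ∀ t ∈ Set.Icc (0 : ℝ) T, ∀ s ∈ Set.Icc (0 : ℝ) T,
      ∫ x, S (t, x) = ∫ x, S (s, x) :=
  mass_conservation_general d T S v hS hv K hK hsupp heq
end

section
/- Liouville's formula for the Jacobian of a flow: let d ≥ 1 and let A, B : ℝ → Matrix (Fin d) (Fin d) ℝ be such that HasDerivAt A (B t * A t) t for every t ∈ ℝ. Then for every t ∈ ℝ, HasDerivAt (fun s => (A s).det) ((B t).trace * (A t).det) t. (Applied with A(t) = Dφ(t,x) the spatial Jacobian of a flow of a velocity field v and B(t) = Dv(t, φ(t,x)), this says d/dt det Dφ(t,x) = div v(t, φ(t,x)) · det Dφ(t,x), the key identity relating the mass-preserving group action to the continuity equation.) -/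
/-!
The determinant is multilinear in the rows, so the derivative of `det ∘ A` is the sum over `i` of
the determinants of `A t` with row `i` replaced by row `i` of `A' t = B t * A t`. That row is
`∑ j, B t i j • A t j`; all terms with `j ≠ i` give a matrix with a repeated row, so the `i`-th
summand is `B t i i * det (A t)`, and summing over `i` gives `trace (B t) * det (A t)`.
-/

attribute [local instance] Matrix.normedAddCommGroup Matrix.normedSpace

namespace Matrix

variable {n R : Type*} [Fintype n] [DecidableEq n]

theorem sum_det_updateRow_mul [CommRing R] (B A : Matrix n n R) :
    ∑ i, (A.updateRow i ((B * A) i)).det = B.trace * A.det := by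
  simp only [mul_apply_eq_vecMul, vecMul_eq_sum, det_updateRow_sum, smul_eq_mul, ← Finset.sum_mul,
    trace, diag]

variable {𝕜 : Type*} [NontriviallyNormedField 𝕜]

def detRowContinuousMultilinear : ContinuousMultilinearMap 𝕜 (fun _ : n => n → 𝕜) 𝕜 where
  toMultilinearMap := (detRowAlternating : (n → 𝕜) [⋀^n]→ₗ[𝕜] 𝕜).toMultilinearMap
  cont := continuous_id.matrix_det

theorem hasFDerivAt_det (M : Matrix n n 𝕜) :
    HasFDerivAt det (detRowContinuousMultilinear.linearDeriv M) M :=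
  detRowContinuousMultilinear.hasFDerivAt M

end Matrix

theorem HasDerivAt.matrix_det {n 𝕜 : Type*} [Fintype n] [DecidableEq n] [NontriviallyNormedField 𝕜]
    {A : 𝕜 → Matrix n n 𝕜} {A' : Matrix n n 𝕜} {t : 𝕜} (hA : HasDerivAt A A' t) :
    HasDerivAt (fun s => (A s).det) (∑ i, ((A t).updateRow i (A' i)).det) t :=
  ((Matrix.hasFDerivAt_det (A t)).comp_hasDerivAt t hA).congr_deriv
    (Matrix.detRowContinuousMultilinear.linearDeriv_apply (A t) A')

theorem liouville_formula_general (d : ℕ)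
    (A B : ℝ → Matrix (Fin d) (Fin d) ℝ)
    (hA : ∀ t : ℝ, HasDerivAt A (B t * A t) t) :
    ∀ t : ℝ, HasDerivAt (fun s => (A s).det) ((B t).trace * (A t).det) t := fun t =>
  Matrix.sum_det_updateRow_mul (B t) (A t) ▸ (hA t).matrix_det

/-- **Liouville's formula for the Jacobian of a flow.**
If the matrix-valued function `A` satisfies `A' t = B t * A t`, then
`(det ∘ A)' t = trace (B t) * det (A t)`.  Applied with `A t = Dφ(t,x)` and
`B t = Dv(t, φ(t,x))`, this gives `d/dt det Dφ(t,x) = div v(t,φ(t,x)) · det Dφ(t,x)`. -/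
theorem liouville_formula (d : ℕ) (hd : 1 ≤ d)
    (A B : ℝ → Matrix (Fin d) (Fin d) ℝ)
    (hA : ∀ t : ℝ, HasDerivAt A (B t * A t) t) :
    ∀ t : ℝ, HasDerivAt (fun s => (A s).det) ((B t).trace * (A t).det) t :=
  liouville_formula_general d A B hA
end

section
/- Uniqueness for the transport equation via the flow: let v : ℝ → E → E and let φ : ℝ → E → E satisfy φ 0 x = x and HasDerivAt (fun t => φ t x) (v t (φ t x)) t for all t ∈ ℝ and x ∈ E, and assume that for every t the map x ↦ φ t x is surjective onto E. If S₁, S₂ : ℝ × E → ℝ are differentiable, both satisfy the optical flow constraint fderiv ℝ Sᵢ (t,y) (1, v t y) = 0 for all (t,y) ∈ ℝ × E, and agree at time zero, S₁ (0, x) = S₂ (0, x) for all x ∈ E, then S₁ = S₂ on all of ℝ × E. -/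
section FlowInvariance

variable {E F : Type*} [NormedAddCommGroup E] [NormedSpace ℝ E]
  [NormedAddCommGroup F] [NormedSpace ℝ F]

theorem hasDerivAt_comp_prodMk_id {S : ℝ × E → F} {γ : ℝ → E} {γ' : E} {s : ℝ}
    (hS : DifferentiableAt ℝ S (s, γ s)) (hγ : HasDerivAt γ γ' s) :
    HasDerivAt (fun s => S (s, γ s)) (fderiv ℝ S (s, γ s) (1, γ')) s :=
  hS.hasFDerivAt.comp_hasDerivAt s ((hasDerivAt_id s).prodMk hγ)

theorem apply_flow_eq_apply_zero {v φ : ℝ → E → E} (hφ0 : ∀ x, φ 0 x = x)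
    (hφ : ∀ t x, HasDerivAt (fun t => φ t x) (v t (φ t x)) t)
    {S : ℝ × E → F} (hS : Differentiable ℝ S)
    (htransport : ∀ t y, fderiv ℝ S (t, y) (1, v t y) = 0) (t : ℝ) (x : E) :
    S (t, φ t x) = S (0, x) := by
  have hderiv : ∀ s, HasDerivAt (fun s => S (s, φ s x)) 0 s := fun s => by
    simpa only [htransport] using hasDerivAt_comp_prodMk_id (hS _) (hφ s x)
  have := is_const_of_deriv_eq_zero (fun s => (hderiv s).differentiableAt)
    (fun s => (hderiv s).deriv) t 0
  simpa only [hφ0] using this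

end FlowInvariance

theorem transport_uniqueness_general (d : ℕ)
    (v φ : ℝ → EuclideanSpace ℝ (Fin d) → EuclideanSpace ℝ (Fin d))
    (hφ0 : ∀ x, φ 0 x = x)
    (hφ : ∀ (t : ℝ) (x : EuclideanSpace ℝ (Fin d)),
      HasDerivAt (fun t => φ t x) (v t (φ t x)) t)
    (hsurj : ∀ t : ℝ, Function.Surjective (φ t))
    (S₁ S₂ : ℝ × EuclideanSpace ℝ (Fin d) → ℝ)
    (h1 : Differentiable ℝ S₁) (h2 : Differentiable ℝ S₂)
    (hofc1 : ∀ (t : ℝ) (y : EuclideanSpace ℝ (Fin d)),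
      fderiv ℝ S₁ (t, y) (1, v t y) = 0)
    (hofc2 : ∀ (t : ℝ) (y : EuclideanSpace ℝ (Fin d)),
      fderiv ℝ S₂ (t, y) (1, v t y) = 0)
    (h0 : ∀ x : EuclideanSpace ℝ (Fin d), S₁ (0, x) = S₂ (0, x)) :
    ∀ p : ℝ × EuclideanSpace ℝ (Fin d), S₁ p = S₂ p := by
  rintro ⟨t, y⟩
  obtain ⟨x, rfl⟩ := hsurj t y
  rw [apply_flow_eq_apply_zero hφ0 hφ h1 hofc1, apply_flow_eq_apply_zero hφ0 hφ h2 hofc2, h0]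

/-- **Uniqueness for the transport equation via the flow.**
Let `φ` be a flow of `v` whose time-`t` maps are surjective.  If `S₁, S₂` are
differentiable, both satisfy the optical flow constraint everywhere, and agree at time
zero, then `S₁ = S₂` on all of `ℝ × E`. -/
theorem transport_uniqueness (d : ℕ) (hd : 1 ≤ d)
    (v φ : ℝ → EuclideanSpace ℝ (Fin d) → EuclideanSpace ℝ (Fin d))
    (hφ0 : ∀ x, φ 0 x = x)
    (hφ : ∀ (t : ℝ) (x : EuclideanSpace ℝ (Fin d)),
      HasDerivAt (fun t => φ t x) (v t (φ t x)) t)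
    (hsurj : ∀ t : ℝ, Function.Surjective (φ t))
    (S₁ S₂ : ℝ × EuclideanSpace ℝ (Fin d) → ℝ)
    (h1 : Differentiable ℝ S₁) (h2 : Differentiable ℝ S₂)
    (hofc1 : ∀ (t : ℝ) (y : EuclideanSpace ℝ (Fin d)),
      fderiv ℝ S₁ (t, y) (1, v t y) = 0)
    (hofc2 : ∀ (t : ℝ) (y : EuclideanSpace ℝ (Fin d)),
      fderiv ℝ S₂ (t, y) (1, v t y) = 0)
    (h0 : ∀ x : EuclideanSpace ℝ (Fin d), S₁ (0, x) = S₂ (0, x)) :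
    ∀ p : ℝ × EuclideanSpace ℝ (Fin d), S₁ p = S₂ p :=
  transport_uniqueness_general d v φ hφ0 hφ hsurj S₁ S₂ h1 h2 hofc1 hofc2 h0
end
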